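/- arXiv:2512.03483 — 3 statements merged into one kernel-verified Lean document; each statement's English description precedes it below -/
import Mathlib

section
/- Let α ∈ (0, 1/2) and β ∈ [0, 1]. There exists a constant c > 0 such that for every h ∈ (0, 1], h² · ∫₀^∞ (r^(−α) / (1 + r^(β/2))) · min{ h^(−2α), h^(−2−2α) / (1 + r) } dr ≤ c · h^β. -/
/-!
Since `1 + r^(β/2) ≥ r^(β/2)` and `1 + r ≥ r`, the integrand is dominated by
`r^(-s) · min A (B / r)` with `s = α + β/2 ∈ (0, 1)`, `A = h^(-2α)`, `B = h^(-2-2α)`.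
Splitting at the crossover point `r = B / A` gives two power integrals, one convergent at `0`
and one at `∞`, whose sum is `A^s B^(1-s) (1/(1-s) + 1/s)`; the powers of `h` then add up
to exactly `h^(β-2)`.
-/

open Real MeasureTheory Set

lemma rpow_neg_div_one_add_rpow_le {r : ℝ} (hr : 0 < r) (a b : ℝ) :
    r ^ (-a) / (1 + r ^ b) ≤ r ^ (-(a + b)) :=
  calc r ^ (-a) / (1 + r ^ b) ≤ r ^ (-a) / r ^ b :=
        div_le_div_of_nonneg_left (rpow_nonneg hr.le _) (rpow_pos_of_pos hr _) (by linarith)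
    _ = r ^ (-(a + b)) := by rw [← rpow_sub hr]; ring_nf

section PowerTimesMin

variable {s A B : ℝ}

lemma rpow_neg_mul_min_div_eqOn_Ioc (hA : 0 < A) :
    EqOn (fun r ↦ r ^ (-s) * min A (B / r)) (fun r ↦ A * r ^ (-s)) (Ioc 0 (B / A)) := by
  rintro r ⟨hr0, hrT⟩
  have : A ≤ B / r := by rw [le_div_iff₀ hr0, mul_comm]; rwa [le_div_iff₀ hA] at hrT
  simp only [min_eq_left this, mul_comm]

lemma rpow_neg_mul_min_div_eqOn_Ioi (hA : 0 < A) (hB : 0 < B) :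
    EqOn (fun r ↦ r ^ (-s) * min A (B / r)) (fun r ↦ B * r ^ (-s - 1)) (Ioi (B / A)) := by
  intro r hrT
  have hr0 : 0 < r := (div_pos hB hA).trans hrT
  have : B / r ≤ A := by rw [div_le_iff₀ hr0, mul_comm]; exact ((div_lt_iff₀ hA).1 hrT).le
  simp only [min_eq_right this, rpow_sub hr0, rpow_one]
  ring

lemma integrableOn_rpow_neg_mul_min_div (hs0 : 0 < s) (hs1 : s < 1) (hA : 0 < A) (hB : 0 < B) :
    IntegrableOn (fun r ↦ r ^ (-s) * min A (B / r)) (Ioi 0) := by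
  have hT : 0 < B / A := div_pos hB hA
  rw [← Ioc_union_Ioi_eq_Ioi hT.le]
  refine IntegrableOn.union ?_ ?_
  · refine IntegrableOn.congr_fun ?_ (rpow_neg_mul_min_div_eqOn_Ioc hA).symm measurableSet_Ioc
    rw [integrableOn_Ioc_iff_integrableOn_Ioo]
    exact ((intervalIntegral.integrableOn_Ioo_rpow_iff hT).2 (by linarith)).const_mul _
  · refine IntegrableOn.congr_fun ?_ (rpow_neg_mul_min_div_eqOn_Ioi hA hB).symm measurableSet_Ioi
    exact (integrableOn_Ioi_rpow_of_lt (by linarith) hT).const_mul _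

lemma integral_rpow_neg_mul_min_div (hs0 : 0 < s) (hs1 : s < 1) (hA : 0 < A) (hB : 0 < B) :
    ∫ r in Ioi 0, r ^ (-s) * min A (B / r) = A ^ s * B ^ (1 - s) * (1 / (1 - s) + 1 / s) := by
  have hT : 0 < B / A := div_pos hB hA
  have hlow : A * (B / A) ^ (1 - s) = A ^ s * B ^ (1 - s) := by
    rw [div_rpow hB.le hA.le, rpow_sub hA, rpow_one]
    field_simp
  have hhigh : B * (B / A) ^ (-s) = A ^ s * B ^ (1 - s) := by
    rw [div_rpow hB.le hA.le, rpow_neg hA.le, rpow_neg hB.le, rpow_sub hB, rpow_one]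
    field_simp
  have hint := integrableOn_rpow_neg_mul_min_div hs0 hs1 hA hB
  rw [← Ioc_union_Ioi_eq_Ioi hT.le] at hint ⊢
  rw [setIntegral_union (Ioc_disjoint_Ioi le_rfl) measurableSet_Ioi
      (hint.mono_set subset_union_left) (hint.mono_set subset_union_right),
    setIntegral_congr_fun measurableSet_Ioc (rpow_neg_mul_min_div_eqOn_Ioc hA),
    setIntegral_congr_fun measurableSet_Ioi (rpow_neg_mul_min_div_eqOn_Ioi hA hB),
    integral_const_mul, integral_const_mul, ← intervalIntegral.integral_of_le hT.le,
    integral_rpow (Or.inl (by linarith)), integral_Ioi_rpow_of_lt (by linarith) hT,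
    zero_rpow (by linarith), sub_zero, show -s + 1 = 1 - s by ring,
    show -s - 1 + 1 = -s by ring, neg_div_neg_eq, mul_div_assoc', mul_div_assoc', hlow, hhigh]
  ring

end PowerTimesMin

/-- Specialization of the contour-integral bound (4.23) with θ₁ = 0, θ₂ = β:
for α ∈ (0, 1/2) and β ∈ [0, 1] there is c > 0 such that for all h ∈ (0, 1],
h² ∫₀^∞ (r^(−α)/(1 + r^(β/2))) · min{h^(−2α), h^(−2−2α)/(1 + r)} dr ≤ c h^β. -/
theorem integral_bound_theta0 (α β : ℝ) (hα : α ∈ Set.Ioo 0 (1/2))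
    (hβ : β ∈ Set.Icc (0:ℝ) 1) :
    ∃ c : ℝ, 0 < c ∧ ∀ h ∈ Set.Ioc (0:ℝ) 1,
      h ^ 2 * ∫ r in Set.Ioi (0:ℝ),
        (r ^ (-α) / (1 + r ^ (β / 2))) *
          min (h ^ (-(2 * α))) (h ^ (-2 - 2 * α) / (1 + r))
      ≤ c * h ^ β := by
  obtain ⟨hα0, hα1⟩ := hα
  obtain ⟨hβ0, hβ1⟩ := hβ
  set s := α + β / 2 with hs
  have hs0 : 0 < s := by positivity
  have hs1 : s < 1 := by linarith
  refine ⟨1 / (1 - s) + 1 / s, add_pos (one_div_pos.2 (by linarith)) (one_div_pos.2 hs0), ?_⟩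
  rintro h ⟨hh0, -⟩
  have hA : 0 < h ^ (-(2 * α)) := rpow_pos_of_pos hh0 _
  have hB : 0 < h ^ (-2 - 2 * α) := rpow_pos_of_pos hh0 _
  have hdom : ∀ r ∈ Ioi (0:ℝ),
      r ^ (-α) / (1 + r ^ (β / 2)) * min (h ^ (-(2 * α))) (h ^ (-2 - 2 * α) / (1 + r))
        ≤ r ^ (-s) * min (h ^ (-(2 * α))) (h ^ (-2 - 2 * α) / r) := fun r (hr : 0 < r) ↦
    mul_le_mul (rpow_neg_div_one_add_rpow_le hr α (β / 2))
      (min_le_min_left _ (div_le_div_of_nonneg_left hB.le hr (by linarith)))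
      (le_min hA.le (by positivity)) (rpow_nonneg hr.le _)
  have hnonneg : ∀ r ∈ Ioi (0:ℝ),
      0 ≤ r ^ (-α) / (1 + r ^ (β / 2)) * min (h ^ (-(2 * α))) (h ^ (-2 - 2 * α) / (1 + r)) :=
    fun r (hr : 0 < r) ↦ mul_nonneg (by positivity) (le_min hA.le (by positivity))
  have hpow : h ^ 2 * ((h ^ (-(2 * α))) ^ s * (h ^ (-2 - 2 * α)) ^ (1 - s)) = h ^ β := by
    rw [← rpow_natCast, ← rpow_mul hh0.le, ← rpow_mul hh0.le, ← rpow_add hh0, ← rpow_add hh0]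
    congr 1
    rw [hs]
    ring
  calc h ^ 2 * ∫ r in Ioi (0:ℝ),
        r ^ (-α) / (1 + r ^ (β / 2)) * min (h ^ (-(2 * α))) (h ^ (-2 - 2 * α) / (1 + r))
      ≤ h ^ 2 * ∫ r in Ioi (0:ℝ), r ^ (-s) * min (h ^ (-(2 * α))) (h ^ (-2 - 2 * α) / r) := by
        refine mul_le_mul_of_nonneg_left ?_ (sq_nonneg h)
        exact integral_mono_of_nonneg (ae_restrict_of_forall_mem measurableSet_Ioi hnonneg)
          (integrableOn_rpow_neg_mul_min_div hs0 hs1 hA hB)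
          (ae_restrict_of_forall_mem measurableSet_Ioi hdom)
    _ = (1 / (1 - s) + 1 / s) * h ^ β := by
        rw [integral_rpow_neg_mul_min_div hs0 hs1 hA hB, ← hpow]
        ring
end

section
/- Let α ∈ (0, 1/2). There exists a constant c > 0 such that for every h ∈ (0, 1], h² · ∫₀^∞ (r^(−α) / (1 + r^(1−α))) · min{ h^(−1−2α), h^(−3−2α) / (1 + r) } dr ≤ c · h^(1−2α) · log(1 + 1/h). -/
/-!
With `K r = r ^ (-α) / (1 + r ^ (1 - α))` and `T = h⁻²`, the integrand is
`h ^ (-1 - 2α) * K r * min 1 (T / (1 + r))`, and `K r ≤ min (r ^ (-α)) r⁻¹`. Splitting `(0, ∞)` at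
`1` and `T`, the three ranges contribute at most `1 / (1 - α)`, `log T = 2 log (1 / h)` and
`T ∫_T^∞ r⁻² = 1`; the logarithm comes from the middle range, where `K r ≈ r⁻¹`.
-/

open Real MeasureTheory Set

theorem integrableOn_of_nonneg_of_le {X : Type*} [MeasurableSpace X] {μ : Measure X}
    {f g : X → ℝ} {s : Set X} (hs : MeasurableSet s) (hf : Measurable f)
    (hf₀ : ∀ x ∈ s, 0 ≤ f x) (hfg : ∀ x ∈ s, f x ≤ g x) (hg : IntegrableOn g s μ) :
    IntegrableOn f s μ :=
  hg.mono' hf.aestronglyMeasurable <| (ae_restrict_iff' hs).2 <| ae_of_all _ fun x hx ↦ by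
    rw [Real.norm_of_nonneg (hf₀ x hx)]; exact hfg x hx

theorem setIntegral_Ioi_le_of_le_on_Ioc_Ioc_Ioi {f g₁ g₂ g₃ : ℝ → ℝ} {a b c : ℝ}
    (hab : a ≤ b) (hbc : b ≤ c) (hf : Measurable f) (hf₀ : ∀ x ∈ Ioi a, 0 ≤ f x)
    (hg₁ : IntegrableOn g₁ (Ioc a b)) (hg₂ : IntegrableOn g₂ (Ioc b c))
    (hg₃ : IntegrableOn g₃ (Ioi c)) (hfg₁ : ∀ x ∈ Ioc a b, f x ≤ g₁ x)
    (hfg₂ : ∀ x ∈ Ioc b c, f x ≤ g₂ x) (hfg₃ : ∀ x ∈ Ioi c, f x ≤ g₃ x) :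
    ∫ x in Ioi a, f x ≤ (∫ x in Ioc a b, g₁ x) + (∫ x in Ioc b c, g₂ x) + ∫ x in Ioi c, g₃ x := by
  have hf₁ := integrableOn_of_nonneg_of_le measurableSet_Ioc hf (fun x hx ↦ hf₀ x hx.1) hfg₁ hg₁
  have hf₂ := integrableOn_of_nonneg_of_le measurableSet_Ioc hf
    (fun x hx ↦ hf₀ x (hab.trans_lt hx.1)) hfg₂ hg₂
  have hf₃ := integrableOn_of_nonneg_of_le measurableSet_Ioi hf
    (fun x hx ↦ hf₀ x ((hab.trans hbc).trans_lt hx)) hfg₃ hg₃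
  have hf₁₂ : IntegrableOn f (Ioc a c) := Ioc_union_Ioc_eq_Ioc hab hbc ▸ hf₁.union hf₂
  rw [← Ioc_union_Ioi_eq_Ioi (hab.trans hbc),
    setIntegral_union (Ioc_disjoint_Ioi le_rfl) measurableSet_Ioi hf₁₂ hf₃,
    ← Ioc_union_Ioc_eq_Ioc hab hbc,
    setIntegral_union (Ioc_disjoint_Ioc_of_le le_rfl) measurableSet_Ioc hf₁ hf₂]
  exact add_le_add (add_le_add (setIntegral_mono_on hf₁ hg₁ measurableSet_Ioc hfg₁)
    (setIntegral_mono_on hf₂ hg₂ measurableSet_Ioc hfg₂))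
    (setIntegral_mono_on hf₃ hg₃ measurableSet_Ioi hfg₃)

theorem rpow_neg_div_one_add_rpow_le_inv {r : ℝ} (hr : 0 < r) (α : ℝ) :
    r ^ (-α) / (1 + r ^ (1 - α)) ≤ r⁻¹ :=
  calc r ^ (-α) / (1 + r ^ (1 - α)) ≤ r ^ (-α) / r ^ (1 - α) := by
        gcongr; exact le_add_of_nonneg_left zero_le_one
    _ = r⁻¹ := by rw [← rpow_sub hr, ← rpow_neg_one]; ring_nf

theorem integral_Ioc_zero_one_rpow_neg {α : ℝ} (hα : α < 1) :
    ∫ r in Ioc (0 : ℝ) 1, r ^ (-α) = 1 / (1 - α) := by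
  rw [← intervalIntegral.integral_of_le zero_le_one, integral_rpow (Or.inl (by linarith)),
    one_rpow, zero_rpow (by linarith)]
  ring_nf

theorem integral_Ioc_one_inv {T : ℝ} (hT : 1 ≤ T) : ∫ r in Ioc (1 : ℝ) T, r⁻¹ = log T := by
  rw [← intervalIntegral.integral_of_le hT, integral_inv_of_pos one_pos (by linarith), div_one]

theorem integral_Ioi_mul_rpow_neg_two {T : ℝ} (hT : 0 < T) :
    ∫ r in Ioi T, T * r ^ (-2 : ℝ) = 1 := by
  rw [integral_const_mul, integral_Ioi_rpow_of_lt (by norm_num) hT]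
  norm_num [rpow_neg_one, hT.ne']

theorem rpow_neg_div_one_add_rpow_mul_min_le {α T r : ℝ} (hT : 0 ≤ T) (hr : 0 < r) :
    r ^ (-α) / (1 + r ^ (1 - α)) * min 1 (T / (1 + r)) ≤ T * r ^ (-2 : ℝ) :=
  calc r ^ (-α) / (1 + r ^ (1 - α)) * min 1 (T / (1 + r)) ≤ r⁻¹ * (T / r) := by
        gcongr
        · exact rpow_neg_div_one_add_rpow_le_inv hr α
        · exact (min_le_right _ _).trans (by gcongr; linarith)
    _ = T * r ^ (-2 : ℝ) := by rw [rpow_neg hr.le, rpow_two]; field_simp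

theorem integral_rpow_neg_div_one_add_rpow_mul_min_le {α T : ℝ} (hα : α < 1) (hT : 1 ≤ T) :
    ∫ r in Ioi (0 : ℝ), r ^ (-α) / (1 + r ^ (1 - α)) * min 1 (T / (1 + r)) ≤
      1 / (1 - α) + log T + 1 := by
  have hK₀ : ∀ r : ℝ, 0 < r → 0 ≤ r ^ (-α) / (1 + r ^ (1 - α)) := fun r hr ↦ by positivity
  have hmin₀ : ∀ r : ℝ, 0 < r → 0 ≤ min 1 (T / (1 + r)) := fun r hr ↦
    le_min zero_le_one (by positivity)
  have hle_K : ∀ r : ℝ, 0 < r → r ^ (-α) / (1 + r ^ (1 - α)) * min 1 (T / (1 + r)) ≤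
      r ^ (-α) / (1 + r ^ (1 - α)) := fun r hr ↦
    mul_le_of_le_one_right (hK₀ r hr) (min_le_left _ _)
  calc ∫ r in Ioi (0 : ℝ), r ^ (-α) / (1 + r ^ (1 - α)) * min 1 (T / (1 + r))
      ≤ (∫ r in Ioc (0 : ℝ) 1, r ^ (-α)) + (∫ r in Ioc (1 : ℝ) T, r⁻¹) +
          ∫ r in Ioi T, T * r ^ (-2 : ℝ) := by
        refine setIntegral_Ioi_le_of_le_on_Ioc_Ioc_Ioi zero_le_one hT (by fun_prop)
          (fun r hr ↦ mul_nonneg (hK₀ r hr) (hmin₀ r hr)) ?_ ?_ ?_ ?_ ?_ ?_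
        · exact (intervalIntegrable_iff_integrableOn_Ioc_of_le zero_le_one).1
            (intervalIntegral.intervalIntegrable_rpow' (by linarith))
        · exact (continuousOn_inv₀.mono fun r hr ↦ (zero_lt_one.trans_le hr.1).ne')
            |>.integrableOn_Icc.mono_set Ioc_subset_Icc_self
        · exact (integrableOn_Ioi_rpow_of_lt (by norm_num) (by linarith)).const_mul T
        · exact fun r ⟨hr₀, _⟩ ↦ (hle_K r hr₀).trans
            (div_le_self (by positivity) (le_add_of_nonneg_right (by positivity)))
        · exact fun r ⟨hr₁, _⟩ ↦ (hle_K r (zero_lt_one.trans hr₁)).trans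
            (rpow_neg_div_one_add_rpow_le_inv (zero_lt_one.trans hr₁) α)
        · exact fun r (hr : T < r) ↦ rpow_neg_div_one_add_rpow_mul_min_le (by linarith)
            (by linarith)
    _ = 1 / (1 - α) + log T + 1 := by
        rw [integral_Ioc_zero_one_rpow_neg hα, integral_Ioc_one_inv hT,
          integral_Ioi_mul_rpow_neg_two (by linarith)]

theorem log_rpow_neg_two_le_two_mul_log_one_add_inv {h : ℝ} (hh : 0 < h) :
    log (h ^ (-2 : ℝ)) ≤ 2 * log (1 + 1 / h) := by
  rw [log_rpow hh, neg_mul, ← mul_neg, ← log_inv, ← one_div]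
  gcongr
  linarith

/-- Specialization of the contour-integral bound (4.23) with θ₁ = 1, θ₂ = 2 − 2α:
for α ∈ (0, 1/2) there is c > 0 such that for all h ∈ (0, 1],
h² ∫₀^∞ (r^(−α)/(1 + r^(1−α))) · min{h^(−1−2α), h^(−3−2α)/(1 + r)} dr
  ≤ c h^(1−2α) log(1 + 1/h). -/
theorem integral_bound_theta1 (α : ℝ) (hα : α ∈ Set.Ioo 0 (1/2)) :
    ∃ c : ℝ, 0 < c ∧ ∀ h ∈ Set.Ioc (0:ℝ) 1,
      h ^ 2 * ∫ r in Set.Ioi (0:ℝ),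
        (r ^ (-α) / (1 + r ^ (1 - α))) *
          min (h ^ (-1 - 2 * α)) (h ^ (-3 - 2 * α) / (1 + r))
      ≤ c * h ^ (1 - 2 * α) * Real.log (1 + 1 / h) := by
  refine ⟨7, by norm_num, fun h ⟨hh₀, hh₁⟩ ↦ ?_⟩
  set T : ℝ := h ^ (-2 : ℝ)
  have hT : 1 ≤ T := one_le_rpow_of_pos_of_le_one_of_nonpos hh₀ hh₁ (by norm_num)
  have hmin_factor : ∀ r : ℝ, min (h ^ (-1 - 2 * α)) (h ^ (-3 - 2 * α) / (1 + r)) =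
      h ^ (-1 - 2 * α) * min 1 (T / (1 + r)) := fun r ↦ by
    rw [mul_min_of_nonneg _ _ (by positivity), mul_one, ← mul_div_assoc, ← rpow_add hh₀]
    ring_nf
  have hpow : h ^ 2 * h ^ (-1 - 2 * α) = h ^ (1 - 2 * α) := by
    rw [← rpow_natCast, ← rpow_add hh₀]; norm_num; ring_nf
  have hlog : 0.6 < log (1 + 1 / h) := by
    have : log 2 ≤ log (1 + 1 / h) :=
      log_le_log (by norm_num) (by linarith [one_le_one_div hh₀ hh₁])
    linarith [log_two_gt_d9]
  have hα₂ : 1 / (1 - α) ≤ 2 := by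
    rw [div_le_iff₀ (by linarith [hα.2])]; linarith [hα.2]
  calc h ^ 2 * ∫ r in Ioi (0 : ℝ), r ^ (-α) / (1 + r ^ (1 - α)) *
        min (h ^ (-1 - 2 * α)) (h ^ (-3 - 2 * α) / (1 + r))
      = h ^ (1 - 2 * α) *
          ∫ r in Ioi (0 : ℝ), r ^ (-α) / (1 + r ^ (1 - α)) * min 1 (T / (1 + r)) := by
        simp_rw [hmin_factor, mul_left_comm _ (h ^ (-1 - 2 * α)), integral_const_mul,
          ← mul_assoc, hpow]
    _ ≤ h ^ (1 - 2 * α) * (1 / (1 - α) + log T + 1) := by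
        gcongr
        exact integral_rpow_neg_div_one_add_rpow_mul_min_le (by linarith [hα.2]) hT
    _ ≤ 7 * h ^ (1 - 2 * α) * log (1 + 1 / h) := by
        rw [mul_comm 7, mul_assoc]
        gcongr
        linarith [log_rpow_neg_two_le_two_mul_log_one_add_inv hh₀]
end

section
/- For every m > 0, α ∈ (0, 1), and θ₁ ∈ [−1, 1] there exists a constant c > 0 such that for all h ∈ (0, 1], all r ≥ 0, and all real x with m ≤ x ≤ h^(−2), one has x^(1 + α + θ₁/2) / |r·e^(iπ/4) − x| ≤ c · min{ h^(min(−2α−θ₁, 0)) / (1 + r^(max(0, −α−θ₁/2))), h^(−2−2α−θ₁) / (1 + r) }. -/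
open Real Complex

/-! Write `s = α + θ₁/2 > -1`. The ray `arg λ = π/4` stays away from the positive axis, so
`|r e^{iπ/4} - x| ≥ (r + x)/4` and the quotient is at most `4 x^(1+s)/(r + x)`. The second bound
comes from `x^(1+s) ≤ h^(-2(1+s))` and `1 + r ≤ (1 + 1/m)(r + x)`. For the first: if `s ≥ 0`,
use `x^s ≤ h^(-2s)` and `x ≤ r + x`; if `s < 0`, use `x^s ≤ m^s` and weighted AM-GM,
`x^(1+s) r^(-s) ≤ (1+s) x - s r ≤ r + x`. -/

/-- The law of cosines, regrouped as `sin² (θ/2) (r+x)² + cos² (θ/2) (r-x)²`. -/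
theorem abs_sin_half_mul_abs_add_le_norm (θ r x : ℝ) :
    |Real.sin (θ / 2)| * |r + x| ≤ ‖(r : ℂ) * exp (θ * I) - x‖ := by
  have hsq : ‖(r : ℂ) * exp (θ * I) - x‖ ^ 2
      = (|Real.sin (θ / 2)| * |r + x|) ^ 2 + (Real.cos (θ / 2) * (r - x)) ^ 2 := by
    have hθ : θ = 2 * (θ / 2) := by ring
    rw [Complex.sq_norm, normSq_apply, mul_pow, sq_abs, sq_abs]
    simp only [sub_re, sub_im, mul_re, mul_im, ofReal_re, ofReal_im, exp_ofReal_mul_I_re,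
      exp_ofReal_mul_I_im, zero_mul, sub_zero, add_zero]
    rw [hθ, Real.cos_two_mul, Real.sin_two_mul, ← hθ]
    linear_combination (4 * r ^ 2 * Real.cos (θ / 2) ^ 2 - (r + x) ^ 2) *
      Real.sin_sq_add_cos_sq (θ / 2)
  refine le_of_pow_le_pow_left₀ two_ne_zero (norm_nonneg _) ?_
  rw [hsq]
  exact le_add_of_nonneg_right (sq_nonneg _)

theorem add_div_four_le_norm_mul_exp_pi_div_four_sub {r x : ℝ} (hr : 0 ≤ r) (hx : 0 ≤ x) :
    (r + x) / 4 ≤ ‖(r : ℂ) * exp ((π / 4 : ℝ) * I) - x‖ := by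
  have hsin : 1 / 4 ≤ |Real.sin (π / 4 / 2)| := by
    have := mul_le_sin (x := π / 4 / 2) (by positivity) (by linarith [pi_pos])
    rw [show 2 / π * (π / 4 / 2) = 1 / 4 by field_simp] at this
    exact this.trans (le_abs_self _)
  calc (r + x) / 4 = 1 / 4 * |r + x| := by rw [abs_of_nonneg (by linarith)]; ring
    _ ≤ |Real.sin (π / 4 / 2)| * |r + x| := by gcongr
    _ ≤ _ := abs_sin_half_mul_abs_add_le_norm _ r x

section RpowDivAdd

variable {m h r x s : ℝ}

theorem rpow_le_rpow_neg_two_mul (hh : 0 < h) (hx : 0 ≤ x) (hxh : x ≤ h ^ (-2 : ℝ))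
    {p : ℝ} (hp : 0 ≤ p) : x ^ p ≤ h ^ (-2 * p) := by
  rw [rpow_mul hh.le]
  exact rpow_le_rpow hx hxh hp

theorem rpow_one_add_div_add_eq (hx : 0 < x) :
    x ^ (1 + s) / (r + x) = x ^ s * (x / (r + x)) := by
  rw [rpow_add hx, rpow_one, mul_comm, mul_div_assoc]

theorem rpow_one_add_div_add_le_of_nonneg (hh : 0 < h) (hr : 0 ≤ r) (hx : 0 < x)
    (hxh : x ≤ h ^ (-2 : ℝ)) (hs : 0 ≤ s) : x ^ (1 + s) / (r + x) ≤ h ^ (-2 * s) := by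
  rw [rpow_one_add_div_add_eq hx]
  calc x ^ s * (x / (r + x)) ≤ h ^ (-2 * s) * 1 := by
        gcongr
        · exact rpow_le_rpow_neg_two_mul hh hx.le hxh hs
        · exact div_le_one_of_le₀ (by linarith) (by linarith)
    _ = h ^ (-2 * s) := mul_one _

theorem rpow_one_add_div_add_mul_le_of_nonpos (hm : 0 < m) (hmx : m ≤ x) (hr : 0 ≤ r)
    (hs : s ≤ 0) (hs' : 0 ≤ 1 + s) :
    x ^ (1 + s) / (r + x) * (1 + r ^ (-s)) ≤ m ^ s + 1 := by
  have hx : 0 < x := hm.trans_le hmx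
  have hrx : 0 < r + x := by linarith
  have hms : 0 < m ^ s := rpow_pos_of_pos hm s
  have hsmall : x ^ (1 + s) / (r + x) ≤ m ^ s := by
    rw [rpow_one_add_div_add_eq hx]
    calc x ^ s * (x / (r + x)) ≤ m ^ s * 1 :=
          mul_le_mul (rpow_le_rpow_of_nonpos hm hmx hs) (div_le_one_of_le₀ (by linarith) hrx.le)
            (by positivity) hms.le
      _ = m ^ s := mul_one _
  have hamgm : x ^ (1 + s) * r ^ (-s) ≤ r + x := by
    have := geom_mean_le_arith_mean2_weighted hs' (neg_nonneg.2 hs) hx.le hr (by ring)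
    nlinarith
  calc x ^ (1 + s) / (r + x) * (1 + r ^ (-s))
      = x ^ (1 + s) / (r + x) + x ^ (1 + s) * r ^ (-s) / (r + x) := by ring
    _ ≤ m ^ s + 1 := add_le_add hsmall ((div_le_one hrx).2 hamgm)

theorem rpow_one_add_div_add_le_mul_rpow_min_div (hm : 0 < m) (hmx : m ≤ x) (hh : 0 < h)
    (hxh : x ≤ h ^ (-2 : ℝ)) (hr : 0 ≤ r) (hs : 0 ≤ 1 + s) :
    x ^ (1 + s) / (r + x) ≤
      (m ^ s + 2) * (h ^ min (-2 * s) 0 / (1 + r ^ max 0 (-s))) := by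
  have hx : 0 < x := hm.trans_le hmx
  have hms : 0 < m ^ s := rpow_pos_of_pos hm s
  rcases le_total 0 s with hs0 | hs0
  · rw [min_eq_left (by linarith), max_eq_left (by linarith), rpow_zero]
    calc x ^ (1 + s) / (r + x) ≤ h ^ (-2 * s) :=
          rpow_one_add_div_add_le_of_nonneg hh hr hx hxh hs0
      _ ≤ (m ^ s + 2) * (h ^ (-2 * s) / (1 + 1)) := by
        have := rpow_pos_of_pos hh (-2 * s)
        rw [mul_div_assoc', le_div_iff₀ (by norm_num)]
        nlinarith
  · rw [min_eq_right (by linarith), max_eq_right (by linarith), rpow_zero, ← mul_div_assoc,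
      mul_one, le_div_iff₀ (by positivity)]
    linarith [rpow_one_add_div_add_mul_le_of_nonpos hm hmx hr hs0 hs]

theorem rpow_one_add_div_add_le_mul_rpow_div_one_add (hm : 0 < m) (hmx : m ≤ x) (hh : 0 < h)
    (hxh : x ≤ h ^ (-2 : ℝ)) (hr : 0 ≤ r) (hs : 0 ≤ 1 + s) :
    x ^ (1 + s) / (r + x) ≤ (1 / m + 1) * (h ^ (-2 * (1 + s)) / (1 + r)) := by
  have hx : 0 < x := hm.trans_le hmx
  have hpow : x ^ (1 + s) ≤ h ^ (-2 * (1 + s)) := rpow_le_rpow_neg_two_mul hh hx.le hxh hs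
  have hden : 1 + r ≤ (1 / m + 1) * (r + x) := by
    have h1 : 1 ≤ x * (1 / m) := by rw [mul_one_div, one_le_div hm]; exact hmx
    nlinarith [div_nonneg hr hm.le]
  rw [mul_div_assoc', div_le_div_iff₀ (by linarith) (by linarith)]
  calc x ^ (1 + s) * (1 + r) ≤ h ^ (-2 * (1 + s)) * ((1 / m + 1) * (r + x)) := by
        gcongr
    _ = (1 / m + 1) * h ^ (-2 * (1 + s)) * (r + x) := by ring

end RpowDivAdd

/-- Scalar inequality underlying the discrete resolvent estimate in Lemma 4.3(i):
for m > 0, α ∈ (0,1), θ₁ ∈ [−1,1] there is c > 0 such that for all h ∈ (0,1],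
r ≥ 0 and m ≤ x ≤ h^(−2),
x^(1+α+θ₁/2)/|r e^(iπ/4) − x|
  ≤ c · min{ h^(min(−2α−θ₁,0)) / (1 + r^(max(0, −α−θ₁/2))), h^(−2−2α−θ₁)/(1 + r) }. -/
theorem scalar_discrete_resolvent_bound (m α θ₁ : ℝ) (hm : 0 < m)
    (hα : α ∈ Set.Ioo (0:ℝ) 1) (hθ₁ : θ₁ ∈ Set.Icc (-1 : ℝ) 1) :
    ∃ c : ℝ, 0 < c ∧ ∀ h ∈ Set.Ioc (0:ℝ) 1, ∀ r : ℝ, 0 ≤ r → ∀ x : ℝ,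
      m ≤ x → x ≤ h ^ (-2 : ℝ) →
      x ^ (1 + α + θ₁ / 2) /
          ‖(r : ℂ) * Complex.exp ((Real.pi / 4 : ℝ) * Complex.I) - (x : ℂ)‖
        ≤ c * min (h ^ (min (-2 * α - θ₁) 0) / (1 + r ^ (max 0 (-α - θ₁ / 2))))
                  (h ^ (-2 - 2 * α - θ₁) / (1 + r)) := by
  obtain ⟨s, rfl⟩ : ∃ s, α = s - θ₁ / 2 := ⟨α + θ₁ / 2, by ring⟩
  have hs : 0 ≤ 1 + s := by linarith [hα.1, hθ₁.1]
  have hms : 0 < m ^ s := rpow_pos_of_pos hm s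
  refine ⟨4 * (m ^ s + 1 / m + 2), by positivity, fun h ⟨hh, _⟩ r hr x hmx hxh => ?_⟩
  have hx : 0 < x := hm.trans_le hmx
  rw [show 1 + (s - θ₁ / 2) + θ₁ / 2 = 1 + s by ring,
    show -2 * (s - θ₁ / 2) - θ₁ = -2 * s by ring,
    show -(s - θ₁ / 2) - θ₁ / 2 = -s by ring,
    show -2 - 2 * (s - θ₁ / 2) - θ₁ = -2 * (1 + s) by ring]
  have hC : 0 ≤ m ^ s + 1 / m + 2 := by positivity
  calc _ ≤ x ^ (1 + s) / ((r + x) / 4) :=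
        div_le_div_of_nonneg_left (by positivity) (by positivity)
          (add_div_four_le_norm_mul_exp_pi_div_four_sub hr hx.le)
    _ = 4 * (x ^ (1 + s) / (r + x)) := by rw [div_div_eq_mul_div]; ring
    _ ≤ 4 * min ((m ^ s + 2) * (h ^ min (-2 * s) 0 / (1 + r ^ max 0 (-s))))
          ((1 / m + 1) * (h ^ (-2 * (1 + s)) / (1 + r))) := by
      gcongr
      exact le_min (rpow_one_add_div_add_le_mul_rpow_min_div hm hmx hh hxh hr hs)
        (rpow_one_add_div_add_le_mul_rpow_div_one_add hm hmx hh hxh hr hs)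
    _ ≤ 4 * min ((m ^ s + 1 / m + 2) * (h ^ min (-2 * s) 0 / (1 + r ^ max 0 (-s))))
          ((m ^ s + 1 / m + 2) * (h ^ (-2 * (1 + s)) / (1 + r))) := by
      gcongr <;> first | positivity | linarith [one_div_pos.2 hm]
    _ = _ := by rw [← mul_min_of_nonneg _ _ hC, mul_assoc]
end
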